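/- Define u(x,y) = h(x,y)/x where h(x,y) = (1/(x+y+1))·[x + x(x+1)/(2(x+y))] − ψ(x+y+1) + ψ(y+1). For fixed y > 0, u(x,y) is strictly decreasing in x on (0, 1/√2]. -/

import Mathlib

noncomputable def psi (z : ℝ) : ℝ := deriv (fun t => Real.log (Real.Gamma t)) z

noncomputable def h (x y : ℝ) : ℝ :=
  (1 / (x + y + 1)) * (x + x * (x + 1) / (2 * (x + y))) - psi (x + y + 1) + psi (y + 1)

noncomputable def u (x y : ℝ) : ℝ := h x y / x

/-!
Write `u x y = R x y - (ψ(w + x) - ψ w) / x` with `w = y + 1` and `R` rational. The recurrence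
`ψ(z + 1) = ψ z + 1/z` and the monotonicity of `ψ` (convexity of `log Γ`) give
`(ψ(w + x) - ψ w) / x = ∑ₖ 1 / ((w + k)(w + x + k))`. For `0 < a < b ≤ 1` the difference of the
`k`-th terms at `a` and at `b` is strictly smaller than the increment `F(y + k) - F(y + k + 1)` of
`F t = R a t - R b t ≥ 0`, an inequality between rational functions. Telescoping gives
`(ψ(w + a) - ψ w) / a - (ψ(w + b) - ψ w) / b < F y`, which is `u b y < u a y`.
-/

open Real Set Filter Topology

lemma differentiableAt_log_Gamma {x : ℝ} (hx : 0 < x) :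
    DifferentiableAt ℝ (fun t => log (Gamma t)) x :=
  (differentiableAt_Gamma fun m => ((neg_nonpos.mpr m.cast_nonneg).trans_lt hx).ne').log
    (Gamma_pos_of_pos hx).ne'

lemma psi_add_one {x : ℝ} (hx : 0 < x) : psi (x + 1) = psi x + 1 / x := by
  have hlog : (fun t => log (Gamma (t + 1))) =ᶠ[𝓝 x] fun t => log (Gamma t) + log t := by
    filter_upwards [eventually_gt_nhds hx] with t ht
    rw [Gamma_add_one ht.ne', log_mul ht.ne' (Gamma_pos_of_pos ht).ne', add_comm]
  rw [psi, ← deriv_comp_add_const, hlog.deriv_eq,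
    deriv_fun_add (differentiableAt_log_Gamma hx) (differentiableAt_log hx.ne'), deriv_log,
    one_div, psi]

lemma monotoneOn_psi : MonotoneOn psi (Ioi 0) :=
  convexOn_log_Gamma.monotoneOn_deriv fun _ hx => differentiableAt_log_Gamma hx

lemma hasSum_psi_sub {w x : ℝ} (hw : 0 < w) (hx : 0 ≤ x) (hx1 : x ≤ 1) :
    HasSum (fun k : ℕ => 1 / (w + k) - 1 / (w + x + k)) (psi (w + x) - psi w) := by
  have hpos : ∀ k : ℕ, 0 < w + k := fun k => by positivity
  have hpos' : ∀ k : ℕ, 0 < w + x + k := fun k => by positivity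
  have hnonneg : ∀ k : ℕ, 0 ≤ 1 / (w + k) - 1 / (w + x + k) := fun k =>
    sub_nonneg.mpr (one_div_le_one_div_of_le (hpos k) (by linarith))
  have hpartial : ∀ n : ℕ, ∑ k ∈ Finset.range n, (1 / (w + k) - 1 / (w + x + k))
      = (psi (w + x) - psi w) - (psi (w + x + n) - psi (w + n)) := by
    intro n
    induction n with
    | zero => simp
    | succ n ih =>
      rw [Finset.sum_range_succ, ih, Nat.cast_succ, ← add_assoc, ← add_assoc,
        psi_add_one (hpos n), psi_add_one (hpos' n)]
      ring
  -- `ψ (w + n) ≤ ψ (w + x + n) ≤ ψ (w + n + 1) = ψ (w + n) + 1 / (w + n)`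
  have hremainder : Tendsto (fun n : ℕ => psi (w + x + n) - psi (w + n)) atTop (𝓝 0) := by
    refine squeeze_zero (fun n => ?_) (fun n => ?_)
      (tendsto_atTop_add_const_left atTop w tendsto_natCast_atTop_atTop).inv_tendsto_atTop
    · exact sub_nonneg.mpr (monotoneOn_psi (hpos n) (hpos' n) (by linarith))
    · have := monotoneOn_psi (hpos' n) (by simpa using (hpos n).trans (lt_add_one _))
        (by linarith : w + x + n ≤ w + n + 1)
      rw [psi_add_one (hpos n), one_div] at this
      show _ ≤ (w + n)⁻¹
      linarith
  rw [hasSum_iff_tendsto_nat_of_nonneg hnonneg, funext hpartial]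
  simpa using tendsto_const_nhds.sub hremainder

lemma hasSum_psi_sub_div {w x : ℝ} (hw : 0 < w) (hx : 0 < x) (hx1 : x ≤ 1) :
    HasSum (fun k : ℕ => 1 / ((w + k) * (w + x + k))) ((psi (w + x) - psi w) / x) := by
  have hterm : (fun k : ℕ => 1 / ((w + k) * (w + x + k)))
      = fun k : ℕ => (1 / (w + k) - 1 / (w + x + k)) / x := by
    funext k
    have : 0 < w + k := by positivity
    field_simp
    ring
  rw [hterm]
  exact (hasSum_psi_sub hw hx.le hx1).div_const x

lemma HasSum.le_of_le_sub_succ {g F : ℕ → ℝ} {s : ℝ} (hg : HasSum g s) (hF : ∀ n, 0 ≤ F n)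
    (h : ∀ k, g k ≤ F k - F (k + 1)) : s ≤ F 0 := by
  have hpartial : ∀ n, ∑ k ∈ Finset.range n, g k ≤ F 0 - F n := by
    intro n
    induction n with
    | zero => simp
    | succ n ih => rw [Finset.sum_range_succ]; linarith [h n]
  exact le_of_tendsto' hg.tendsto_sum_nat fun n => (hpartial n).trans (by linarith [hF n])

lemma HasSum.lt_of_lt_sub_succ {g F : ℕ → ℝ} {s : ℝ} (hg : HasSum g s) (hF : ∀ n, 0 ≤ F n)
    (h : ∀ k, g k < F k - F (k + 1)) : s < F 0 := by
  have htail :=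
    ((hasSum_nat_add_iff' 1).mpr hg).le_of_le_sub_succ (fun n => hF (n + 1))
      fun k => (h (k + 1)).le
  simp only [Finset.sum_range_one] at htail
  linarith [h 0]

noncomputable def rationalPart (x y : ℝ) : ℝ := 1 / (x + y + 1) * (1 + (x + 1) / (2 * (x + y)))

lemma u_eq_rationalPart_sub {x y : ℝ} (hx : 0 < x) (hy : 0 < y) :
    u x y = rationalPart x y - (psi (y + 1 + x) - psi (y + 1)) / x := by
  have : 0 < x + y := by linarith
  rw [u, h, rationalPart, show y + 1 + x = x + y + 1 by ring]
  field_simp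
  ring

lemma rationalPart_le_rationalPart {a b t : ℝ} (ha : 0 < a) (hab : a < b) (ht : 0 < t) :
    rationalPart b t ≤ rationalPart a t := by
  rw [← sub_nonneg]
  have hb : 0 < b := ha.trans hab
  have hident : rationalPart a t - rationalPart b t
      = (b - a) * (1 + (b - a) + 2 * a + 3 * a * (b - a) + 3 * a ^ 2 + t + 2 * t * (b - a)
          + 4 * t * a + t ^ 2) / (2 * (a + t) * (a + t + 1) * (b + t) * (b + t + 1)) := by
    rw [rationalPart, rationalPart]
    field_simp
    ring
  rw [hident]
  positivity

lemma sub_lt_rationalPart_increment {a b t : ℝ} (ha : 0 < a) (hab : a < b) (hab1 : a * b ≤ 1)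
    (ht : 0 < t) :
    1 / ((t + 1) * (t + 1 + a)) - 1 / ((t + 1) * (t + 1 + b))
      < (rationalPart a t - rationalPart b t)
        - (rationalPart a (t + 1) - rationalPart b (t + 1)) := by
  have hb : 0 < b := ha.trans hab
  set N := 4 - 2 * a ^ 2 * b ^ 2 + 6 * (b - a) + 2 * (b - a) ^ 2 + 12 * a + 10 * a * (b - a)
      + 10 * a ^ 2 + t * (12 + 10 * (b - a) + 20 * a + 12 * a * (b - a) + 12 * a ^ 2)
      + t ^ 2 * (6 + 6 * (b - a) + 12 * a + 6 * a * (b - a) + 6 * a ^ 2)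
      + t ^ 3 * (2 * (b - a) + 4 * a) with hN
  have hident : (rationalPart a t - rationalPart b t)
        - (rationalPart a (t + 1) - rationalPart b (t + 1))
        - (1 / ((t + 1) * (t + 1 + a)) - 1 / ((t + 1) * (t + 1 + b)))
      = (b - a) * N / (2 * (a + t) * (a + t + 1) * (a + t + 2) * (b + t) * (b + t + 1)
          * (b + t + 2) * (t + 1)) := by
    simp only [hN, rationalPart]
    field_simp
    ring
  -- the only negative term `-2a²b²` of `N` is absorbed by the constant `4` since `ab ≤ 1`
  have hNpos : 0 < N := by
    have : 0 < 4 - 2 * a ^ 2 * b ^ 2 := by nlinarith [mul_pos ha hb]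
    simp only [hN, add_assoc]
    exact add_pos_of_pos_of_nonneg this (by positivity)
  rw [← sub_pos, hident]
  positivity

lemma u_lt_u {y a b : ℝ} (hy : 0 < y) (ha : 0 < a) (hab : a < b) (hb1 : b ≤ 1) :
    u b y < u a y := by
  have hw : 0 < y + 1 := by linarith
  have hb : 0 < b := ha.trans hab
  have hsum := (hasSum_psi_sub_div hw ha (hab.le.trans hb1)).sub (hasSum_psi_sub_div hw hb hb1)
  have hab1 : a * b ≤ 1 := by nlinarith
  have hlt := hsum.lt_of_lt_sub_succ (F := fun k => rationalPart a (y + k) - rationalPart b (y + k))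
    (fun n => sub_nonneg.mpr (rationalPart_le_rationalPart ha hab (by positivity))) fun k => by
      convert sub_lt_rationalPart_increment ha hab hab1 (by positivity : 0 < y + k) using 3 <;>
        push_cast <;> ring_nf
  rw [u_eq_rationalPart_sub ha hy, u_eq_rationalPart_sub hb hy]
  simp only [Nat.cast_zero, add_zero] at hlt
  linarith

theorem stmt_11 (y : ℝ) (hy : 0 < y) :
    StrictAntiOn (fun x => u x y) (Set.Ioc 0 (1 / Real.sqrt 2)) := by
  have hsqrt : 1 / √2 ≤ 1 := by
    rw [div_le_one (by positivity)]
    exact one_le_sqrt.mpr one_le_two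
  exact fun a ha b hb hab => u_lt_u hy ha.1 hab (hb.2.trans hsqrt)
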